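/- For every natural number k, (3/4)^k · Σ_{r=0}^k C(k,r) · 3^{−r} · (1/2 + r) ≥ Γ(3/2 + k)/(Γ(1/2)·k!), with equality if and only if k = 0 or k = 1 (strict inequality for all k ≥ 2). -/

import Mathlib

/-! The left side is the mean of `1/2 + R` for `R ~ Binomial(k, 1/4)`, namely `(k + 2)/4`.
The right side `a_k = gammaRatio k` satisfies `a_0 = 1/2` and `a_{k+1} = a_k (2k+3)/(2k+2)`, and
`(k+2)(2k+3) ≤ 2(k+1)(k+3)` with equality only at `k = 0`; so by induction `a_k ≤ (k+2)/4`,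
with equality exactly for `k ≤ 1`. -/

open Real Finset

open Polynomial in
theorem bernsteinPolynomial.sum_eval_mul_add {R : Type*} [CommRing R] (n : ℕ) (x c : R) :
    ∑ ν ∈ range (n + 1), (bernsteinPolynomial R n ν).eval x * (c + ν) = c + n * x := by
  have h₀ := congrArg (eval x) (bernsteinPolynomial.sum R n)
  have h₁ := congrArg (eval x) (bernsteinPolynomial.sum_smul R n)
  simp only [eval_finsetSum, eval_one, nsmul_eq_mul, eval_mul, eval_natCast, eval_X] at h₀ h₁
  simp only [mul_add, sum_add_distrib, ← sum_mul, h₀, one_mul, mul_comm _ ((_ : ℕ) : R), h₁]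

theorem binomial_quarter_mean (k : ℕ) :
    (3 / 4 : ℝ) ^ k * ∑ r ∈ range (k + 1), (k.choose r : ℝ) / 3 ^ r * (1 / 2 + r)
      = (k + 2) / 4 := by
  rw [mul_sum]
  have hterm : ∀ r ∈ range (k + 1), (3 / 4 : ℝ) ^ k * ((k.choose r : ℝ) / 3 ^ r * (1 / 2 + r))
      = (bernsteinPolynomial ℝ k r).eval (1 / 4) * (1 / 2 + r) := by
    intro r hr
    -- `(3/4)^k C(k,r) / 3^r = C(k,r) (1/4)^r (3/4)^(k-r)`, the binomial weights for `p = 1/4`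
    have hrk : r ≤ k := Nat.lt_succ_iff.mp (mem_range.mp hr)
    obtain ⟨m, rfl⟩ := Nat.exists_eq_add_of_le hrk
    simp only [bernsteinPolynomial, Polynomial.eval_mul, Polynomial.eval_pow,
      Polynomial.eval_natCast, Polynomial.eval_sub, Polynomial.eval_one, Polynomial.eval_X,
      Nat.add_sub_cancel_left]
    rw [pow_add, show (1 - 1 / 4 : ℝ) = 3 / 4 by norm_num,
      show (1 / 4 : ℝ) ^ r = (3 / 4) ^ r / 3 ^ r by rw [← div_pow]; norm_num]
    ring
  rw [sum_congr rfl hterm, bernsteinPolynomial.sum_eval_mul_add]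
  ring

noncomputable def gammaRatio (k : ℕ) : ℝ := Gamma (3 / 2 + k) / (Gamma (1 / 2) * Nat.factorial k)

lemma gammaRatio_zero : gammaRatio 0 = 1 / 2 := by
  have hΓ : Gamma (1 / 2) ≠ 0 := (Gamma_pos_of_pos one_half_pos).ne'
  rw [gammaRatio, show (3 / 2 : ℝ) + (0 : ℕ) = 1 / 2 + 1 by norm_num,
    Gamma_add_one one_half_pos.ne']
  field_simp
  simp

lemma gammaRatio_succ (k : ℕ) : gammaRatio (k + 1) = gammaRatio k * (2 * k + 3) / (2 * k + 2) := by
  have hs : (3 / 2 : ℝ) + (k + 1 : ℕ) = (3 / 2 + k) + 1 := by push_cast; ring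
  have hΓ : Gamma (1 / 2) ≠ 0 := (Gamma_pos_of_pos one_half_pos).ne'
  rw [gammaRatio, gammaRatio, hs, Gamma_add_one (by positivity), Nat.factorial_succ]
  push_cast
  field_simp
  ring

lemma gammaRatio_one : gammaRatio 1 = 3 / 4 := by
  rw [gammaRatio_succ, gammaRatio_zero]; norm_num

lemma gammaRatio_le (k : ℕ) : gammaRatio k ≤ (k + 2) / 4 := by
  induction k with
  | zero => rw [gammaRatio_zero]; norm_num
  | succ k ih =>
    rw [gammaRatio_succ, div_le_iff₀ (by positivity)]
    push_cast
    nlinarith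

lemma gammaRatio_lt (k : ℕ) : gammaRatio (k + 2) < (k + 4) / 4 := by
  have ih := gammaRatio_le (k + 1)
  rw [gammaRatio_succ, div_lt_iff₀ (by positivity)]
  push_cast at ih ⊢
  nlinarith

/-- Inequality (ineqBB), the case `δ = 1` of the key sufficient condition in the proof of
Proposition 4.3 for `l = 1`:
`(3/4)^k Σ_{r=0}^k C(k,r) 3^{-r} (1/2 + r) ≥ Γ(3/2+k)/(Γ(1/2)·k!)`,
with equality iff `k = 0` or `k = 1`. -/
theorem ineqBB (k : ℕ) :
    (3 / 4 : ℝ) ^ k * ∑ r ∈ Finset.range (k + 1),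
        (Nat.choose k r : ℝ) / (3 : ℝ) ^ r * (1 / 2 + (r : ℝ))
      ≥ Real.Gamma (3 / 2 + (k : ℝ)) / (Real.Gamma (1 / 2) * (Nat.factorial k : ℝ)) ∧
    ((3 / 4 : ℝ) ^ k * ∑ r ∈ Finset.range (k + 1),
        (Nat.choose k r : ℝ) / (3 : ℝ) ^ r * (1 / 2 + (r : ℝ))
      = Real.Gamma (3 / 2 + (k : ℝ)) / (Real.Gamma (1 / 2) * (Nat.factorial k : ℝ))
      ↔ k = 0 ∨ k = 1) := by
  rw [binomial_quarter_mean, ← gammaRatio]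
  refine ⟨gammaRatio_le k, ?_⟩
  rcases k with _ | _ | k
  · simp only [gammaRatio_zero]; norm_num
  · norm_num [gammaRatio_one]
  · have hlt := gammaRatio_lt k
    refine iff_of_false (fun h => ?_) (by omega)
    push_cast at h
    linarith
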